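/- Let u < v in (0,1) with Δ = v - u, and let f_{j,v} and F_{j,u} denote the pmf of Binomial(j,v) and CDF of Binomial(j,u). If j < 8/Δ, then Σ_{s=0}^{j} f_{j,v}(s)/F_{j,u}(s) ≤ 1 + 3/Δ. -/

import Mathlib

/-- pmf of the Binomial(n,x) distribution. -/
noncomputable def binomPMF (n : ℕ) (x : ℝ) (s : ℕ) : ℝ :=
  (n.choose s : ℝ) * x ^ s * (1 - x) ^ (n - s)

/-- CDF of the Binomial(n,x) distribution. -/
noncomputable def binomCDF (n : ℕ) (x : ℝ) (k : ℕ) : ℝ :=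
  ∑ s ∈ Finset.range (k + 1), binomPMF n x s

/-!
Split the sum at `k = ⌈j u⌉`. For `s ≥ k` we have `F_{j,u}(s) ≥ F_{j,u}(k) ≥ 1 / (1 + j u (1 - u))`
by Cantelli's inequality, so these terms contribute at most `1 + j u (1 - u)`. For `s < k` we use
`F_{j,u}(s) ≥ f_{j,u}(s)`: the likelihood ratio `f_{j,v}(s) / f_{j,u}(s)` is geometric in `s` with
ratio `q = v (1 - u) / (u (1 - v)) > 1` and is at most `1` for `s ≤ j u` (Gibbs' inequality), so
these terms sum to at most `q / (q - 1) = v (1 - u) / (v - u)`. The hypothesis `j (v - u) < 8`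
makes the total at most `1 + 3 / (v - u)`.
-/

open Finset

lemma cantelli_sum_le {ι : Type*} {S T : Finset ι} (hTS : T ⊆ S) {p X : ι → ℝ} {m V t : ℝ}
    (hp : ∀ i ∈ S, 0 ≤ p i) (hsum : ∑ i ∈ S, p i = 1) (hmean : ∑ i ∈ S, p i * X i = m)
    (hvar : ∑ i ∈ S, p i * (X i - m) ^ 2 = V) (ht : 0 < t) (hT : ∀ i ∈ T, m + t ≤ X i) :
    ∑ i ∈ T, p i ≤ V / (V + t ^ 2) := by
  have hV : 0 ≤ V := hvar ▸ sum_nonneg fun i hi => mul_nonneg (hp i hi) (sq_nonneg _)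
  -- Markov's inequality for `(X - m + c)²` with the optimal shift `c = V / t`.
  set c := V / t
  have hc : 0 ≤ c := div_nonneg hV ht.le
  have hcentered : ∑ i ∈ S, p i * (X i - m) = 0 := by
    simp only [mul_sub, sum_sub_distrib, hmean, ← sum_mul, hsum, one_mul, sub_self]
  have hshifted : ∑ i ∈ S, p i * (X i - m + c) ^ 2 = V + c ^ 2 := by
    calc ∑ i ∈ S, p i * (X i - m + c) ^ 2
        = ∑ i ∈ S, p i * (X i - m) ^ 2 + 2 * c * ∑ i ∈ S, p i * (X i - m)
          + c ^ 2 * ∑ i ∈ S, p i := by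
          simp only [mul_sum, ← sum_add_distrib]
          exact sum_congr rfl fun i _ => by ring
      _ = V + c ^ 2 := by rw [hvar, hcentered, hsum]; ring
  have hmarkov : (t + c) ^ 2 * ∑ i ∈ T, p i ≤ V + c ^ 2 := by
    calc (t + c) ^ 2 * ∑ i ∈ T, p i = ∑ i ∈ T, p i * (t + c) ^ 2 := by
          rw [mul_sum]; exact sum_congr rfl fun i _ => mul_comm _ _
      _ ≤ ∑ i ∈ T, p i * (X i - m + c) ^ 2 := sum_le_sum fun i hi =>
          mul_le_mul_of_nonneg_left
            (pow_le_pow_left₀ (by positivity) (by linarith [hT i hi]) 2) (hp i (hTS hi))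
      _ ≤ ∑ i ∈ S, p i * (X i - m + c) ^ 2 := sum_le_sum_of_subset_of_nonneg hTS
          fun i hi _ => mul_nonneg (hp i hi) (sq_nonneg _)
      _ = V + c ^ 2 := hshifted
  calc ∑ i ∈ T, p i ≤ (V + c ^ 2) / (t + c) ^ 2 := by
        rw [le_div_iff₀ (by positivity)]; linarith
    _ = V / (V + t ^ 2) := by
        simp only [c]
        field_simp
        ring

section Binomial

variable {n : ℕ} {x : ℝ}

lemma binomPMF_eq_eval_bernsteinPolynomial (n : ℕ) (x : ℝ) (s : ℕ) :
    binomPMF n x s = (bernsteinPolynomial ℝ n s).eval x := by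
  simp [binomPMF, bernsteinPolynomial]

lemma binomPMF_nonneg (hx₀ : 0 ≤ x) (hx₁ : x ≤ 1) (s : ℕ) : 0 ≤ binomPMF n x s := by
  have : 0 ≤ 1 - x := by linarith
  unfold binomPMF
  positivity

lemma binomPMF_pos (hx₀ : 0 < x) (hx₁ : x < 1) {s : ℕ} (hs : s ≤ n) : 0 < binomPMF n x s := by
  have : 0 < 1 - x := by linarith
  have := Nat.choose_pos hs
  unfold binomPMF
  positivity

lemma sum_binomPMF (n : ℕ) (x : ℝ) : ∑ s ∈ range (n + 1), binomPMF n x s = 1 := by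
  simpa [binomPMF_eq_eval_bernsteinPolynomial, Polynomial.eval_finsetSum] using
    congrArg (Polynomial.eval x) (bernsteinPolynomial.sum ℝ n)

lemma sum_binomPMF_mul (n : ℕ) (x : ℝ) :
    ∑ s ∈ range (n + 1), binomPMF n x s * s = n * x := by
  simpa [binomPMF_eq_eval_bernsteinPolynomial, Polynomial.eval_finsetSum, mul_comm] using
    congrArg (Polynomial.eval x) (bernsteinPolynomial.sum_smul ℝ n)

lemma sum_binomPMF_mul_sq (n : ℕ) (x : ℝ) :
    ∑ s ∈ range (n + 1), binomPMF n x s * (s - n * x) ^ 2 = n * x * (1 - x) := by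
  have := congrArg (Polynomial.eval x) (bernsteinPolynomial.variance ℝ n)
  simp only [Polynomial.eval_finsetSum, Polynomial.eval_mul, Polynomial.eval_pow,
    Polynomial.eval_sub, Polynomial.eval_X, Polynomial.eval_natCast,
    Polynomial.eval_one, nsmul_eq_mul] at this
  rw [← this]
  refine sum_congr rfl fun s _ => ?_
  rw [binomPMF_eq_eval_bernsteinPolynomial]
  ring

lemma binomPMF_le_binomCDF (hx₀ : 0 ≤ x) (hx₁ : x ≤ 1) (s : ℕ) :
    binomPMF n x s ≤ binomCDF n x s :=
  single_le_sum (fun t _ => binomPMF_nonneg hx₀ hx₁ t) (self_mem_range_succ s)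

lemma binomCDF_monotone (hx₀ : 0 ≤ x) (hx₁ : x ≤ 1) : Monotone (binomCDF n x) :=
  fun _ _ h => sum_le_sum_of_subset_of_nonneg (range_subset_range.2 (by omega))
    fun t _ _ => binomPMF_nonneg hx₀ hx₁ t

lemma inv_one_add_le_binomCDF_ceil (hx₀ : 0 ≤ x) (hx₁ : x ≤ 1) :
    (1 + n * x * (1 - x))⁻¹ ≤ binomCDF n x ⌈n * x⌉₊ := by
  set k := ⌈(n : ℝ) * x⌉₊
  set V := (n : ℝ) * x * (1 - x)
  have hV : 0 ≤ V := mul_nonneg (by positivity) (by linarith)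
  have hkn : k ≤ n := Nat.ceil_le.2 (mul_le_of_le_one_right n.cast_nonneg hx₁)
  have hsplit : binomCDF n x k + ∑ s ∈ Ico (k + 1) (n + 1), binomPMF n x s = 1 := by
    rw [binomCDF, sum_range_add_sum_Ico _ (by omega), sum_binomPMF]
  have htail : ∑ s ∈ Ico (k + 1) (n + 1), binomPMF n x s ≤ V / (V + 1 ^ 2) := by
    refine cantelli_sum_le (S := range (n + 1)) (X := fun s => (s : ℝ))
      (fun s hs => mem_range.2 (mem_Ico.1 hs).2) (fun s _ => binomPMF_nonneg hx₀ hx₁ s)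
      (sum_binomPMF n x) (sum_binomPMF_mul n x) (sum_binomPMF_mul_sq n x) one_pos
      fun s hs => ?_
    have : (k : ℝ) + 1 ≤ s := by exact_mod_cast (mem_Ico.1 hs).1
    linarith [Nat.le_ceil ((n : ℝ) * x)]
  have : (1 + V)⁻¹ = 1 - V / (V + 1 ^ 2) := by field_simp; ring
  linarith

lemma sum_Ico_ceil_binomPMF_div_binomCDF_le {y : ℝ} (hx₀ : 0 ≤ x) (hx₁ : x ≤ 1) (hy₀ : 0 ≤ y)
    (hy₁ : y ≤ 1) :
    ∑ s ∈ Ico ⌈n * x⌉₊ (n + 1), binomPMF n y s / binomCDF n x s ≤ 1 + n * x * (1 - x) := by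
  set k := ⌈(n : ℝ) * x⌉₊
  have hV : 0 < 1 + n * x * (1 - x) := by
    have : 0 ≤ (n : ℝ) * x * (1 - x) := mul_nonneg (by positivity) (by linarith)
    linarith
  have hF := inv_one_add_le_binomCDF_ceil (n := n) hx₀ hx₁
  have hF₀ : 0 < binomCDF n x k := (inv_pos.2 hV).trans_le hF
  calc ∑ s ∈ Ico k (n + 1), binomPMF n y s / binomCDF n x s
      ≤ ∑ s ∈ Ico k (n + 1), binomPMF n y s / binomCDF n x k := sum_le_sum fun s hs =>
        div_le_div_of_nonneg_left (binomPMF_nonneg hy₀ hy₁ s) hF₀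
          (binomCDF_monotone hx₀ hx₁ (mem_Ico.1 hs).1)
    _ = (∑ s ∈ Ico k (n + 1), binomPMF n y s) / binomCDF n x k := (sum_div ..).symm
    _ ≤ 1 / binomCDF n x k := by
        gcongr
        exact (sum_le_sum_of_subset_of_nonneg (fun s hs => mem_range.2 (mem_Ico.1 hs).2)
          fun s _ _ => binomPMF_nonneg hy₀ hy₁ s).trans_eq (sum_binomPMF n y)
    _ ≤ 1 + n * x * (1 - x) := by rw [one_div]; exact inv_le_of_inv_le₀ hV hF

end Binomial

section LikelihoodRatio

variable {u v : ℝ}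

lemma binomPMF_div_binomPMF {n s : ℕ} (hu₀ : 0 < u) (hu₁ : u < 1) (hv₁ : v < 1) (hs : s ≤ n) :
    binomPMF n v s / binomPMF n u s
      = ((1 - v) / (1 - u)) ^ n * (v * (1 - u) / (u * (1 - v))) ^ s := by
  obtain ⟨d, rfl⟩ := Nat.exists_eq_add_of_le hs
  have hu : u ≠ 0 := hu₀.ne'
  have hu' : 1 - u ≠ 0 := by linarith
  have hv' : 1 - v ≠ 0 := by linarith
  have hc : ((s + d).choose s : ℝ) ≠ 0 := by exact_mod_cast (Nat.choose_pos hs).ne'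
  simp only [binomPMF, Nat.add_sub_cancel_left]
  rw [div_pow, div_pow, mul_pow, mul_pow, pow_add]
  field_simp
  ring

lemma div_mul_div_rpow_le_one (hu₀ : 0 < u) (hu₁ : u < 1) (hv₀ : 0 ≤ v) (hv₁ : v < 1) :
    (1 - v) / (1 - u) * (v * (1 - u) / (u * (1 - v))) ^ u ≤ 1 := by
  have hu : u ≠ 0 := hu₀.ne'
  have hu' : 1 - u ≠ 0 := by linarith
  have hv' : 1 - v ≠ 0 := by linarith
  have hw : 0 < (1 - v) / (1 - u) := div_pos (by linarith) (by linarith)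
  -- Gibbs' inequality, i.e. weighted AM-GM for `v / u` and `(1 - v) / (1 - u)`.
  have hgibbs := Real.geom_mean_le_arith_mean2_weighted hu₀.le (sub_nonneg.2 hu₁.le)
    (div_nonneg hv₀ hu₀.le) hw.le (add_sub_cancel u 1)
  have hsum : u * (v / u) + (1 - u) * ((1 - v) / (1 - u)) = 1 := by
    field_simp
    ring
  have hq : v * (1 - u) / (u * (1 - v)) = v / u / ((1 - v) / (1 - u)) := by
    field_simp
  rw [hsum, Real.rpow_sub hw, Real.rpow_one] at hgibbs
  rw [hq, Real.div_rpow (div_nonneg hv₀ hu₀.le) hw.le]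
  convert hgibbs using 1
  ring

lemma pow_mul_pow_le_of_le_mul_add_one {n k : ℕ} (hu₀ : 0 < u) (huv : u ≤ v) (hv₁ : v < 1)
    (hk : (k : ℝ) ≤ n * u + 1) :
    ((1 - v) / (1 - u)) ^ n * (v * (1 - u) / (u * (1 - v))) ^ k
      ≤ v * (1 - u) / (u * (1 - v)) := by
  have hu₁ : u < 1 := huv.trans_lt hv₁
  set w := (1 - v) / (1 - u)
  set q := v * (1 - u) / (u * (1 - v))
  have hw : 0 ≤ w := div_nonneg (by linarith) (by linarith)
  have hq : 1 ≤ q := by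
    rw [le_div_iff₀ (mul_pos hu₀ (by linarith))]
    nlinarith
  have hq₀ : 0 < q := one_pos.trans_le hq
  calc w ^ n * q ^ k = w ^ n * q ^ (k : ℝ) := by rw [Real.rpow_natCast]
    _ ≤ w ^ n * q ^ ((n : ℝ) * u + 1) := by gcongr
    _ = (w * q ^ u) ^ n * q := by
        rw [Real.rpow_add hq₀, Real.rpow_one, mul_comm (n : ℝ) u, Real.rpow_mul_natCast hq₀.le,
          mul_pow, mul_assoc]
    _ ≤ 1 ^ n * q := by
        gcongr
        exact div_mul_div_rpow_le_one hu₀ hu₁ (hu₀.trans_le huv).le hv₁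
    _ = q := by rw [one_pow, one_mul]

lemma sum_range_binomPMF_div_binomCDF_le {n k : ℕ} (hu₀ : 0 < u) (huv : u < v) (hv₁ : v < 1)
    (hk : (k : ℝ) ≤ n * u + 1) :
    ∑ s ∈ range k, binomPMF n v s / binomCDF n u s ≤ v * (1 - u) / (v - u) := by
  have hu₁ : u < 1 := huv.trans hv₁
  set w := (1 - v) / (1 - u)
  set q := v * (1 - u) / (u * (1 - v))
  have hw : 0 ≤ w := div_nonneg (by linarith) (by linarith)
  have hq : 1 < q := by
    rw [lt_div_iff₀ (mul_pos hu₀ (by linarith))]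
    nlinarith
  have hsn : ∀ s ∈ range k, s ≤ n := fun s hs => by
    have : (s : ℝ) + 1 ≤ k := by exact_mod_cast mem_range.1 hs
    have : (n : ℝ) * u ≤ n := mul_le_of_le_one_right n.cast_nonneg hu₁.le
    exact_mod_cast (by linarith : (s : ℝ) ≤ n)
  calc ∑ s ∈ range k, binomPMF n v s / binomCDF n u s
      ≤ ∑ s ∈ range k, w ^ n * q ^ s := sum_le_sum fun s hs => by
        rw [← binomPMF_div_binomPMF hu₀ hu₁ hv₁ (hsn s hs)]
        exact div_le_div_of_nonneg_left (binomPMF_nonneg (hu₀.trans huv).le hv₁.le s)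
          (binomPMF_pos hu₀ hu₁ (hsn s hs))
          (binomPMF_le_binomCDF hu₀.le hu₁.le s)
    _ = w ^ n * q ^ k / (q - 1) - w ^ n / (q - 1) := by
        rw [← mul_sum, geom_sum_eq hq.ne']
        ring
    _ ≤ q / (q - 1) := by
        have hq₁ : 0 < q - 1 := by linarith
        have : 0 ≤ w ^ n / (q - 1) := by positivity
        have := div_le_div_of_nonneg_right
          (pow_mul_pow_le_of_le_mul_add_one hu₀ huv.le hv₁ hk) hq₁.le
        linarith
    _ = v * (1 - u) / (v - u) := by
        have : 1 - v ≠ 0 := by linarith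
        rw [div_eq_div_iff (by linarith) (by linarith)]
        simp only [q]
        field_simp
        ring

end LikelihoodRatio

/-- let 0 < u < v < 1 with Δ = v - u. If j < 8/Δ then
Σ_{s=0}^{j} f_{j,v}(s)/F_{j,u}(s) ≤ 1 + 3/Δ. -/
theorem ratio_sum_small_j (u v : ℝ) (hu : 0 < u) (huv : u < v) (hv : v < 1)
    (j : ℕ) (hj : (j : ℝ) < 8 / (v - u)) :
    ∑ s ∈ Finset.range (j + 1), binomPMF j v s / binomCDF j u s ≤ 1 + 3 / (v - u) := by
  have hΔ : 0 < v - u := sub_pos.2 huv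
  have hu₁ : u < 1 := huv.trans hv
  set k := ⌈(j : ℝ) * u⌉₊
  have hkj : k ≤ j + 1 :=
    (Nat.ceil_le.2 (mul_le_of_le_one_right j.cast_nonneg hu₁.le)).trans j.le_succ
  have hlow := sum_range_binomPMF_div_binomCDF_le (n := j) hu huv hv
    (Nat.ceil_lt_add_one (by positivity)).le
  have hhigh := sum_Ico_ceil_binomPMF_div_binomCDF_le (n := j) hu.le hu₁.le
    (hu.trans huv).le hv.le
  -- `j u (1 - u) < 8 u (1 - u) / Δ` and `(1 - u) (1 + 8 u) ≤ 3`.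
  have harith : v * (1 - u) / (v - u) + j * u * (1 - u) ≤ 3 / (v - u) := by
    rw [lt_div_iff₀ hΔ] at hj
    rw [div_add' _ _ _ hΔ.ne', div_le_div_iff_of_pos_right hΔ]
    nlinarith [mul_pos hu (sub_pos.2 hu₁), sq_nonneg (u - 7 / 16)]
  rw [← sum_range_add_sum_Ico _ hkj]
  linarith
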